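/- A ring R is a CSNC ring if and only if the following two conditions hold: (1) the element 2 of R is nilpotent; and (2) for every clean element a of R there exists a natural number k ≥ 0 such that a^(2^k) is a strongly nil-clean element of R. -/

import Mathlib

/-- An element `a` of a ring is *clean* if `a = e + u` for some idempotent `e` and unit `u`. -/
def IsCleanElem {R : Type*} [Ring R] (a : R) : Prop :=
  ∃ e u : R, IsIdempotentElem e ∧ IsUnit u ∧ a = e + u

/-- An element `a` of a ring is *strongly nil-clean* if `a = e + q` for some idempotent `e`
and nilpotent `q` with `e * q = q * e`. -/
def IsStronglyNilCleanElem {R : Type*} [Ring R] (a : R) : Prop :=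
  ∃ e q : R, IsIdempotentElem e ∧ IsNilpotent q ∧ e * q = q * e ∧ a = e + q

/-- A ring is a *CSNC ring* if every clean element is strongly nil-clean. -/
def IsCSNCRing (R : Type*) [Ring R] : Prop :=
  ∀ a : R, IsCleanElem a → IsStronglyNilCleanElem a

/-!
An element `a` is strongly nil-clean exactly when `a - a ^ 2` is nilpotent: one direction is the
factorisation `(e + q) - (e + q) ^ 2 = q * (1 - 2 * e - q)`, the other takes the idempotent
`1 - (1 - a ^ m) ^ m`, a polynomial in `a` that differs from `a` by a multiple of `a - a ^ 2`.
Since `2 = 1 + 1` is clean, a CSNC ring has `2 - 2 ^ 2 = -2` nilpotent. Conversely, if `2` is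
nilpotent then `(a - a ^ 2) ^ 2 = (a ^ 2 - a ^ 4) - 2 * a ^ 2 * (a - a ^ 2)`, so nilpotency of
`b - b ^ 2` passes from `b = a ^ 2` to `b = a`, and hence from `b = a ^ 2 ^ k` down to `b = a`.
-/

open Polynomial

theorem X_sub_X_sq_dvd_X_sub_one_sub_one_sub_pow_pow {m : ℕ} (hm : m ≠ 0) :
    (X - X ^ 2 : ℤ[X]) ∣ X - (1 - (1 - X ^ m) ^ m) := by
  have hcop : IsCoprime (X : ℤ[X]) (X - C 1) := ⟨1, -1, by rw [C_1]; ring⟩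
  have hX : (X : ℤ[X]) ∣ X - (1 - (1 - X ^ m) ^ m) := by
    simp [X_dvd_iff, coeff_zero_eq_eval_zero, hm]
  have hX1 : (X - C 1 : ℤ[X]) ∣ X - (1 - (1 - X ^ m) ^ m) := by
    rw [dvd_iff_isRoot]
    simp [hm]
  rw [show (X - X ^ 2 : ℤ[X]) = -(X * (X - C 1)) by simp; ring, neg_dvd]
  exact hcop.mul_dvd hX hX1

section Ring

variable {R : Type*} [Ring R]

theorem IsStronglyNilCleanElem.isNilpotent_sub_sq {a : R} (h : IsStronglyNilCleanElem a) :
    IsNilpotent (a - a ^ 2) := by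
  obtain ⟨e, q, he, hq, heq, rfl⟩ := h
  have hfactor : (e + q) - (e + q) ^ 2 = q * (1 - 2 * e - q) := by
    simp only [sq, mul_add, add_mul, mul_sub, mul_one, two_mul, he.eq, heq]
    abel
  have hcomm : Commute q (1 - 2 * e - q) :=
    ((Commute.one_right q).sub_right ((Commute.ofNat_left 2 q).symm.mul_right heq.symm)).sub_right
      (Commute.refl q)
  rw [hfactor]
  exact hcomm.isNilpotent_mul_right hq

theorem IsStronglyNilCleanElem.of_isNilpotent_sub_sq {a : R} (h : IsNilpotent (a - a ^ 2)) :
    IsStronglyNilCleanElem a := by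
  obtain ⟨n, hn⟩ := h
  set m := n + 1
  have hm : (a - a ^ 2) ^ m = 0 := by rw [pow_succ, hn, zero_mul]
  set e := 1 - (1 - a ^ m) ^ m
  have hae : Commute a e := (Commute.one_right a).sub_right
    (((Commute.one_right a).sub_right (Commute.self_pow a m)).pow_right m)
  obtain ⟨g, hg⟩ := X_sub_X_sq_dvd_X_sub_one_sub_one_sub_pow_pow n.succ_ne_zero
  have hq : a - e = (a - a ^ 2) * aeval a g := by simpa [e] using congrArg (aeval a) hg
  refine ⟨e, a - e, isIdempotentElem_one_sub_one_sub_pow_pow a m hm, ?_, ?_, by abel⟩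
  · rw [hq, ← show aeval a (X - X ^ 2 : ℤ[X]) = a - a ^ 2 by simp]
    exact ((Commute.all _ g).map (aeval a)).isNilpotent_mul_right (by simpa using ⟨m, hm⟩)
  · exact (hae.symm.sub_right (Commute.refl e)).eq

theorem isStronglyNilCleanElem_iff_isNilpotent_sub_sq {a : R} :
    IsStronglyNilCleanElem a ↔ IsNilpotent (a - a ^ 2) :=
  ⟨IsStronglyNilCleanElem.isNilpotent_sub_sq, IsStronglyNilCleanElem.of_isNilpotent_sub_sq⟩

theorem isNilpotent_sub_sq_of_isNilpotent_sq_sub_sq (h2 : IsNilpotent (2 : R)) {a : R}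
    (h : IsNilpotent (a ^ 2 - (a ^ 2) ^ 2)) : IsNilpotent (a - a ^ 2) := by
  have hpoly : ((X - X ^ 2) ^ 2 : ℤ[X]) = (X ^ 2 - (X ^ 2) ^ 2) - 2 * (X ^ 2 * (X - X ^ 2)) := by
    ring
  have hsq : (a - a ^ 2) ^ 2 =
      aeval a (X ^ 2 - (X ^ 2) ^ 2 : ℤ[X]) - aeval a (2 * (X ^ 2 * (X - X ^ 2)) : ℤ[X]) := by
    simpa using congrArg (aeval a) hpoly
  refine IsNilpotent.of_pow (m := 2) ?_
  rw [hsq]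
  refine ((Commute.all (S := ℤ[X]) _ _).map (aeval a)).isNilpotent_sub (by simpa using h) ?_
  rw [map_mul, map_ofNat]
  exact (Commute.ofNat_left 2 _).isNilpotent_mul_right h2

theorem IsStronglyNilCleanElem.of_pow_two_pow (h2 : IsNilpotent (2 : R)) {a : R} (k : ℕ)
    (h : IsStronglyNilCleanElem (a ^ 2 ^ k)) : IsStronglyNilCleanElem a := by
  induction k generalizing a with
  | zero => simpa using h
  | succ k ih =>
    rw [pow_succ', pow_mul] at h
    exact .of_isNilpotent_sub_sq
      (isNilpotent_sub_sq_of_isNilpotent_sq_sub_sq h2 (ih h).isNilpotent_sub_sq)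

theorem isCleanElem_two : IsCleanElem (2 : R) :=
  ⟨1, 1, .one, isUnit_one, one_add_one_eq_two.symm⟩

theorem IsCSNCRing.isNilpotent_two (h : IsCSNCRing R) : IsNilpotent (2 : R) := by
  have := (h 2 isCleanElem_two).isNilpotent_sub_sq
  rwa [show (2 : R) - 2 ^ 2 = -2 by norm_num, isNilpotent_neg_iff] at this

end Ring

theorem stmt_15 (R : Type*) [Ring R] :
    IsCSNCRing R ↔
      IsNilpotent (2 : R) ∧
        ∀ a : R, IsCleanElem a → ∃ k : ℕ, IsStronglyNilCleanElem (a ^ 2 ^ k) := by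
  refine ⟨fun h ↦ ⟨h.isNilpotent_two, fun a ha ↦ ⟨0, by simpa using h a ha⟩⟩, ?_⟩
  rintro ⟨h2, hpow⟩ a ha
  obtain ⟨k, hk⟩ := hpow a ha
  exact hk.of_pow_two_pow h2
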